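/- arXiv:2211.08589 — 4 statements merged into one kernel-verified Lean document; each statement's English description precedes it below -/
import Mathlib

section
/- For every integer s ≥ 3, there exists an edge-coloured graph (H, χ_H) on C(s,2) + s vertices with the following three properties: (1) the largest rainbow clique in (H, χ_H) has exactly C(s,2) + 1 vertices; (2) for every vertex v of H, the graph H − v contains a rainbow clique on C(s,2) + 1 vertices; (3) for every colour k ∈ ℕ, there is a rainbow clique on C(s,2) + 1 vertices none of whose edges is coloured k. -/
/-!
Take `s` base vertices and one vertex for each of the `C(s,2)` pairs of base vertices, and join
everything. The base edge `{i, j}` and the spoke from the pair vertex `{i, j}` to a fixed endpoint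
of it share a colour; every other edge gets a colour of its own. A vertex set is then a rainbow
clique iff it never contains a pair vertex together with both of its endpoints. If such a set
contains the base vertex `x`, sending every other base vertex `j` to the pair `{x, j}` embeds it
into the pairs plus one point, so it has at most `C(s,2) + 1` vertices. The bound is attained by
all pair vertices plus one base vertex, and by all pair vertices but `{i, j}` plus `i` and `j`;
choosing among these avoids any given vertex or colour.
-/

/-- `T` is a rainbow clique in the edge-coloured graph `(G, c)`: the vertices of `T` are
pairwise adjacent and the edges between them receive pairwise distinct colours. -/
def IsRainbowClique {V : Type} (G : SimpleGraph V) (c : Sym2 V → ℕ) (T : Finset V) : Prop :=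
  G.IsClique (T : Set V) ∧
  ∀ u ∈ T, ∀ v ∈ T, ∀ a ∈ T, ∀ b ∈ T, u ≠ v → a ≠ b → s(u, v) ≠ s(a, b) →
    c s(u, v) ≠ c s(a, b)

section

variable {V W : Type}

theorem isRainbowClique_iff {G : SimpleGraph V} {c : Sym2 V → ℕ} {T : Finset V} :
    IsRainbowClique G c T ↔ G.IsClique (T : Set V) ∧ Set.InjOn c {e | e ∈ T.sym2 ∧ ¬ e.IsDiag} := by
  refine and_congr_right fun _ => ⟨fun h e he e' he' hc => ?_, ?_⟩
  · induction e using Sym2.ind with | _ u v =>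
    induction e' using Sym2.ind with | _ a b =>
    simp only [Set.mem_ofPred_eq, Finset.mk_mem_sym2_iff, Sym2.mk_isDiag_iff] at he he'
    by_contra hne
    exact h u he.1.1 v he.1.2 a he'.1.1 b he'.1.2 he.2 he'.2 hne hc
  · intro h u hu v hv a ha b hb huv hab hne hc
    exact hne (h ⟨Finset.mk_mem_sym2_iff.2 ⟨hu, hv⟩, by simpa⟩
      ⟨Finset.mk_mem_sym2_iff.2 ⟨ha, hb⟩, by simpa⟩ hc)

theorem isRainbowClique_map_iff (e : V ≃ W) {G : SimpleGraph V} {c : Sym2 V → ℕ}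
    {T : Finset V} :
    IsRainbowClique (G.map e.toEmbedding) (c ∘ Sym2.map e.symm) (T.map e.toEmbedding) ↔
      IsRainbowClique G c T := by
  rw [IsRainbowClique, IsRainbowClique, Finset.coe_map, SimpleGraph.isClique_map_image_iff]
  simp only [Finset.forall_mem_map, Function.comp_apply, Sym2.map_mk, Equiv.coe_toEmbedding,
    Equiv.symm_apply_apply, ne_eq, EmbeddingLike.apply_eq_iff_eq, Sym2.eq_iff]

def IsRainbowGadget (G : SimpleGraph V) (c : Sym2 V → ℕ) (m : ℕ) : Prop :=
  ((∃ T, IsRainbowClique G c T ∧ T.card = m) ∧ (∀ T, IsRainbowClique G c T → T.card ≤ m)) ∧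
    (∀ v, ∃ T, IsRainbowClique G c T ∧ T.card = m ∧ v ∉ T) ∧
    (∀ k, ∃ T, IsRainbowClique G c T ∧ T.card = m ∧
      ∀ u ∈ T, ∀ v ∈ T, u ≠ v → c s(u, v) ≠ k)

theorem IsRainbowGadget.map {G : SimpleGraph V} {c : Sym2 V → ℕ} {m : ℕ}
    (h : IsRainbowGadget G c m) (e : V ≃ W) :
    IsRainbowGadget (G.map e.toEmbedding) (c ∘ Sym2.map e.symm) m := by
  obtain ⟨⟨⟨T, hT, hTm⟩, hle⟩, hv, hk⟩ := h
  have hsurj (T' : Finset W) : T' = (T'.map e.symm.toEmbedding).map e.toEmbedding := by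
    simp [Finset.map_map]
  refine ⟨⟨⟨_, (isRainbowClique_map_iff e).2 hT, by simpa⟩, fun T' hT' => ?_⟩,
    fun w => ?_, fun k => ?_⟩
  · rw [hsurj T', isRainbowClique_map_iff] at hT'
    simpa using hle _ hT'
  · obtain ⟨T, hT, hTm, hwT⟩ := hv (e.symm w)
    exact ⟨_, (isRainbowClique_map_iff e).2 hT, by simpa, by simpa using hwT⟩
  · obtain ⟨T, hT, hTm, hkT⟩ := hk k
    refine ⟨_, (isRainbowClique_map_iff e).2 hT, by simpa, ?_⟩
    simp only [Finset.forall_mem_map]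
    simpa using hkT

end

namespace RainbowGadget

variable {s : ℕ}

abbrev Pair (s : ℕ) := {p : Sym2 (Fin s) // ¬ p.IsDiag}

abbrev Vertex (s : ℕ) := Pair s ⊕ Fin s

lemma card_pair : Fintype.card (Pair s) = s.choose 2 := by
  rw [Sym2.card_subtype_not_diag, Fintype.card_fin]

lemma Pair.exists_mem_ne (p : Pair s) (x : Fin s) : ∃ i ∈ p.1, i ≠ x := by
  obtain ⟨z, hz⟩ := p
  induction z using Sym2.ind with
  | _ a b =>
    by_cases ha : a = x
    · exact ⟨b, Sym2.mem_mk_right a b, fun hb => hz (by simp [ha, hb])⟩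
    · exact ⟨a, Sym2.mem_mk_left a b, ha⟩

lemma Pair.eq_of_forall_mem {p q : Pair s} (h : ∀ i ∈ q.1, i ∈ p.1) : q = p := by
  obtain ⟨z, hz⟩ := q
  induction z using Sym2.ind with
  | _ a b =>
    have hab : a ≠ b := by simpa using hz
    exact Subtype.ext (Sym2.eq_of_ne_mem hab (Sym2.mem_mk_left a b) (Sym2.mem_mk_right a b)
      (h a (Sym2.mem_mk_left a b)) (h b (Sym2.mem_mk_right a b)))

/-- `.inl p` is the colour shared by the two edges of `colourClass p`, `.inr e` a private colour
of the edge `e`. -/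
abbrev Colour (s : ℕ) := Pair s ⊕ Sym2 (Vertex s)

-- Any endpoint would do.
noncomputable def anchor (p : Pair s) : Fin s := p.1.out.1

lemma anchor_mem (p : Pair s) : anchor p ∈ p.1 := Sym2.out_fst_mem _

def baseEdge (p : Pair s) : Sym2 (Vertex s) := p.1.map .inr

noncomputable def spokeEdge (p : Pair s) : Sym2 (Vertex s) := s(.inl p, .inr (anchor p))

def colourClass (p : Pair s) : Set (Sym2 (Vertex s)) := {baseEdge p, spokeEdge p}

lemma baseEdge_ne_spokeEdge (p q : Pair s) : baseEdge p ≠ spokeEdge q := by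
  intro h
  have : (Sum.inl q : Vertex s) ∈ baseEdge p := h ▸ Sym2.mem_mk_left _ _
  simp [baseEdge, Sym2.mem_map] at this

lemma eq_of_mem_colourClass {e : Sym2 (Vertex s)} {p q : Pair s} (hp : e ∈ colourClass p)
    (hq : e ∈ colourClass q) : p = q := by
  simp only [colourClass, Set.mem_insert_iff, Set.mem_singleton_iff] at hp hq
  rcases hp with rfl | rfl <;> rcases hq with h | h
  · exact Subtype.ext (Sym2.map.injective Sum.inr_injective h)
  · exact (baseEdge_ne_spokeEdge _ _ h).elim
  · exact (baseEdge_ne_spokeEdge _ _ h.symm).elim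
  · rcases Sym2.eq_iff.1 h with ⟨h, -⟩ | ⟨h, -⟩
    · exact Sum.inl_injective h
    · exact nomatch h

open Classical in
noncomputable def colour (e : Sym2 (Vertex s)) : Colour s :=
  if h : ∃ p, e ∈ colourClass p then .inl h.choose else .inr e

lemma colour_eq_inl_iff {e : Sym2 (Vertex s)} {p : Pair s} :
    colour e = .inl p ↔ e ∈ colourClass p := by
  unfold colour
  split_ifs with h
  · exact ⟨fun hp => Sum.inl_injective hp ▸ h.choose_spec,
      fun hp => congrArg _ (eq_of_mem_colourClass h.choose_spec hp)⟩
  · exact ⟨fun hp => (nomatch hp), fun hp => (h ⟨p, hp⟩).elim⟩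

lemma eq_of_colour_eq_inr {e e' : Sym2 (Vertex s)} (h : colour e = .inr e') : e = e' := by
  unfold colour at h
  split_ifs at h
  exact Sum.inr_injective h

noncomputable def colouring (e : Sym2 (Vertex s)) : ℕ := Fintype.equivFin (Colour s) (colour e)

lemma colouring_eq_iff {e e' : Sym2 (Vertex s)} :
    colouring e = colouring e' ↔ colour e = colour e' :=
  Fin.val_injective.eq_iff.trans (Fintype.equivFin _).injective.eq_iff

lemma baseEdge_mem_sym2 {T : Finset (Vertex s)} {p : Pair s} :
    baseEdge p ∈ T.sym2 ↔ ∀ i ∈ p.1, .inr i ∈ T := by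
  simp [baseEdge, Finset.mem_sym2_iff, Sym2.mem_map]

lemma spokeEdge_mem_sym2 {T : Finset (Vertex s)} {p : Pair s} :
    spokeEdge p ∈ T.sym2 ↔ .inl p ∈ T ∧ .inr (anchor p) ∈ T :=
  Finset.mk_mem_sym2_iff

def Admissible (T : Finset (Vertex s)) : Prop := ∀ p, .inl p ∈ T → baseEdge p ∉ T.sym2

theorem isRainbowClique_iff_admissible {T : Finset (Vertex s)} :
    IsRainbowClique ⊤ colouring T ↔ Admissible T := by
  have hclique : (⊤ : SimpleGraph (Vertex s)).IsClique (T : Set (Vertex s)) := fun _ _ _ _ h => h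
  rw [isRainbowClique_iff, and_iff_right hclique]
  constructor
  · intro h p hp hbase
    have hspoke : spokeEdge p ∈ T.sym2 :=
      spokeEdge_mem_sym2.2 ⟨hp, baseEdge_mem_sym2.1 hbase _ (anchor_mem p)⟩
    refine baseEdge_ne_spokeEdge p p (h ⟨hbase, ?_⟩ ⟨hspoke, ?_⟩ ?_)
    · simpa [baseEdge, Sym2.isDiag_map Sum.inr_injective] using p.2
    · simp [spokeEdge]
    · rw [colouring_eq_iff, colour_eq_inl_iff.2 (Or.inl rfl), colour_eq_inl_iff.2 (Or.inr rfl)]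
  · rintro hg e ⟨he, -⟩ e' ⟨he', -⟩ hc
    rw [colouring_eq_iff] at hc
    rcases hcol : colour e with p | e₀
    · rw [hcol, eq_comm, colour_eq_inl_iff] at hc
      rw [colour_eq_inl_iff] at hcol
      rcases hcol with rfl | rfl <;> rcases hc with rfl | rfl
      · rfl
      · exact (hg p (spokeEdge_mem_sym2.1 he').1 he).elim
      · exact (hg p (spokeEdge_mem_sym2.1 he).1 he').elim
      · rfl
    · rw [hcol, eq_comm] at hc
      exact (eq_of_colour_eq_inr hcol).trans (eq_of_colour_eq_inr hc).symm

def starPair (x : Fin s) : Vertex s → Option (Pair s)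
  | .inl p => some p
  | .inr j => if h : j = x then none else some ⟨s(x, j), by simpa using Ne.symm h⟩

lemma injOn_starPair {T : Finset (Vertex s)} (hT : Admissible T) {x : Fin s} (hx : .inr x ∈ T) :
    Set.InjOn (starPair x) T := by
  have hcross {p : Pair s} {j : Fin s} (hp : .inl p ∈ T) (hj : .inr j ∈ T) : p.1 ≠ s(x, j) :=
    fun h => hT p hp (baseEdge_mem_sym2.2 (by simp [h, hx, hj]))
  rintro (p | i) hu (q | j) hv h <;> simp only [starPair] at h
  · exact congrArg _ (Option.some_injective _ h)
  · split_ifs at h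
    exact (hcross hu hv (congrArg Subtype.val (Option.some_injective _ h))).elim
  · split_ifs at h
    exact (hcross hv hu (congrArg Subtype.val (Option.some_injective _ h).symm)).elim
  · split_ifs at h with hi hj
    · rw [hi, hj]
    · exact congrArg _ (Sym2.congr_right.1 (congrArg Subtype.val (Option.some_injective _ h)))

theorem card_le_of_admissible {T : Finset (Vertex s)} (hT : Admissible T) :
    T.card ≤ s.choose 2 + 1 := by
  rcases T.toRight.eq_empty_or_nonempty with hB | ⟨x, hx⟩
  · calc T.card = T.toLeft.card := by
          rw [← Finset.card_toLeft_add_card_toRight, hB, Finset.card_empty, add_zero]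
      _ ≤ s.choose 2 := card_pair ▸ Finset.card_le_univ _
      _ ≤ s.choose 2 + 1 := Nat.le_succ _
  · calc T.card ≤ (Finset.univ : Finset (Option (Pair s))).card :=
          Finset.card_le_card_of_injOn _ (fun _ _ => Finset.mem_coe.2 (Finset.mem_univ _))
            (injOn_starPair hT (Finset.mem_toRight.1 hx))
      _ = s.choose 2 + 1 := by rw [Finset.card_univ, Fintype.card_option, card_pair]

def withBase (x : Fin s) : Finset (Vertex s) := Finset.univ.disjSum {x}

def splitPair (p : Pair s) : Finset (Vertex s) := (Finset.univ.erase p).disjSum p.1.toFinset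

lemma admissible_withBase (x : Fin s) : Admissible (withBase x) := by
  intro p _ hbase
  obtain ⟨i, hi, hix⟩ := p.exists_mem_ne x
  simpa [withBase, hix] using baseEdge_mem_sym2.1 hbase i hi

lemma admissible_splitPair (p : Pair s) : Admissible (splitPair p) := by
  intro q hq hbase
  refine (Finset.mem_erase.1 (Finset.inl_mem_disjSum.1 hq)).1 (Pair.eq_of_forall_mem fun i hi => ?_)
  simpa [splitPair] using baseEdge_mem_sym2.1 hbase i hi

lemma card_withBase (x : Fin s) : (withBase x).card = s.choose 2 + 1 := by
  rw [withBase, Finset.card_disjSum, Finset.card_univ, card_pair, Finset.card_singleton]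

lemma card_splitPair (p : Pair s) : (splitPair p).card = s.choose 2 + 1 := by
  have h := Finset.card_erase_add_one (Finset.mem_univ p)
  rw [Finset.card_univ, card_pair] at h
  rw [splitPair, Finset.card_disjSum, Sym2.card_toFinset_of_not_isDiag _ p.2]
  omega

theorem exists_admissible_not_mem (hs : 2 ≤ s) (v : Vertex s) :
    ∃ T, Admissible T ∧ T.card = s.choose 2 + 1 ∧ v ∉ T := by
  rcases v with p | x
  · exact ⟨splitPair p, admissible_splitPair p, card_splitPair p, by simp [splitPair]⟩
  · have : Nontrivial (Fin s) := Fin.nontrivial_iff_two_le.2 hs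
    obtain ⟨y, hyx⟩ := exists_ne x
    exact ⟨withBase y, admissible_withBase y, card_withBase y, by simpa [withBase] using hyx.symm⟩

theorem exists_admissible_forall_colour_ne (hs : 3 ≤ s) (c : Colour s) :
    ∃ T, Admissible T ∧ T.card = s.choose 2 + 1 ∧ ∀ e ∈ T.sym2, colour e ≠ c := by
  rcases c with p | e₀
  · have hlt : p.1.toFinset.card < (Finset.univ : Finset (Fin s)).card := by
      rw [Sym2.card_toFinset_of_not_isDiag _ p.2, Finset.card_univ, Fintype.card_fin]
      omega
    obtain ⟨x, -, hx⟩ := Finset.exists_mem_notMem_of_card_lt_card hlt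
    refine ⟨withBase x, admissible_withBase x, card_withBase x, fun e he hcol => ?_⟩
    rcases colour_eq_inl_iff.1 hcol with rfl | rfl
    · exact admissible_withBase x p (by simp [withBase]) he
    · have hanchor : anchor p = x := by simpa [withBase] using (spokeEdge_mem_sym2.1 he).2
      exact hx (Sym2.mem_toFinset.2 (hanchor ▸ anchor_mem p))
  · obtain ⟨T, hT, hcard, hT₀⟩ := exists_admissible_not_mem (by omega) e₀.out.1
    refine ⟨T, hT, hcard, fun e he hcol => hT₀ ?_⟩
    exact Finset.mem_sym2_iff.1 (eq_of_colour_eq_inr hcol ▸ he) _ (Sym2.out_fst_mem e₀)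

lemma card_vertex : Fintype.card (Vertex s) = s.choose 2 + s := by
  rw [Fintype.card_sum, card_pair, Fintype.card_fin]

theorem isRainbowGadget (hs : 3 ≤ s) : IsRainbowGadget ⊤ (colouring (s := s)) (s.choose 2 + 1) := by
  simp only [IsRainbowGadget, isRainbowClique_iff_admissible]
  let x : Fin s := ⟨0, by omega⟩
  refine ⟨⟨⟨_, admissible_withBase x, card_withBase x⟩, fun _ => card_le_of_admissible⟩,
    exists_admissible_not_mem (by omega), fun k => ?_⟩
  by_cases hk : ∃ e : Sym2 (Vertex s), colouring e = k
  · obtain ⟨e, rfl⟩ := hk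
    obtain ⟨T, hT, hcard, hcol⟩ := exists_admissible_forall_colour_ne hs (colour e)
    exact ⟨T, hT, hcard, fun u hu v hv _ h =>
      hcol _ (Finset.mk_mem_sym2_iff.2 ⟨hu, hv⟩) (colouring_eq_iff.1 h)⟩
  · exact ⟨_, admissible_withBase x, card_withBase x, fun _ _ _ _ _ h => hk ⟨_, h⟩⟩

end RainbowGadget

/-- **Lemma.** For every `s ≥ 3`, there is an edge-coloured graph `(H, χ_H)` on
`C(s,2) + s` vertices such that: (1) the largest rainbow clique in `H` has exactly
`C(s,2) + 1` vertices; (2) for every vertex `v`, there is a rainbow clique on `C(s,2) + 1`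
vertices avoiding `v`; (3) for every colour `k`, there is a rainbow clique on `C(s,2) + 1`
vertices none of whose edges has colour `k`. -/
theorem exists_gadget (s : ℕ) (hs : 3 ≤ s) :
    ∃ (H : SimpleGraph (Fin (s.choose 2 + s))) (χH : Sym2 (Fin (s.choose 2 + s)) → ℕ),
      ((∃ T, IsRainbowClique H χH T ∧ T.card = s.choose 2 + 1) ∧
        (∀ T, IsRainbowClique H χH T → T.card ≤ s.choose 2 + 1)) ∧
      (∀ v : Fin (s.choose 2 + s),
        ∃ T, IsRainbowClique H χH T ∧ T.card = s.choose 2 + 1 ∧ v ∉ T) ∧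
      (∀ k : ℕ, ∃ T, IsRainbowClique H χH T ∧ T.card = s.choose 2 + 1 ∧
        ∀ u ∈ T, ∀ v ∈ T, u ≠ v → χH s(u, v) ≠ k) :=
  ⟨_, _, (RainbowGadget.isRainbowGadget hs).map
    (Fintype.equivFinOfCardEq RainbowGadget.card_vertex)⟩
end

section
/- Let s ≥ 3, let S be a set of size s, and let S^(2) be the set of two-element subsets of S. Let K be the complete graph on the (disjoint) vertex set S ∪ S^(2), and let χ be an edge-colouring of K such that: for every pair {x,y} ∈ S^(2), the two edges (x, {x,y}) and (y, {x,y}) receive the same colour c_{xy}; the colours c_{xy} are pairwise distinct over distinct pairs {x,y}; and all remaining edges of K receive pairwise distinct colours, each different from every c_{xy}. Then every rainbow clique in (K, χ) has at most C(s,2) + 1 vertices. -/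
/-- In the complete graph on `S ⊕ S^(2)`, an edge is *special* if it joins `x ∈ S` to a pair
`p ∈ S^(2)` with `x ∈ p`. -/
def SpecialEdge {S : Type} (e : Sym2 (S ⊕ {p : Sym2 S // ¬ p.IsDiag})) : Prop :=
  ∃ (x : S) (p : {p : Sym2 S // ¬ p.IsDiag}), x ∈ p.val ∧ e = s(Sum.inl x, Sum.inr p)

/-!
If a rainbow clique `T` contains a pair `p = {x, y}` then it cannot contain both `x` and `y`,
since the edges `(x, p)` and `(y, p)` have the same colour. So the pairs in `T` avoid the
`C(a, 2)` pairs formed by the `a` elements of `S` in `T`, and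
`|T| ≤ a + C(s, 2) - C(a, 2) ≤ C(s, 2) + 1` because `a ≤ C(a, 2) + 1`.
-/

open Finset

lemma Nat.le_choose_two_add_one : ∀ n : ℕ, n ≤ n.choose 2 + 1
  | 0 => zero_le _
  | n + 1 => by rw [Nat.choose_succ_succ', Nat.choose_one_right]; omega

lemma Sym2.card_add_choose_two_le_of_disjoint_sym2 {α : Type*} [Fintype α] [DecidableEq α]
    {A : Finset α} {B : Finset (Sym2 α)} (hB : ∀ z ∈ B, ¬ z.IsDiag) (hAB : Disjoint B A.sym2) :
    #B + (#A).choose 2 ≤ (Fintype.card α).choose 2 := by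
  have mem_pairs (s : Finset α) (z : Sym2 α) :
      z ∈ s.offDiag.image Sym2.mk.uncurry ↔ z ∈ s.sym2 ∧ ¬ z.IsDiag := by
    induction z using Sym2.ind
    aesop
  have hdisj : Disjoint B (A.offDiag.image Sym2.mk.uncurry) :=
    hAB.mono_right fun z hz => ((mem_pairs A z).1 hz).1
  rw [← Sym2.card_image_offDiag A, ← card_union_of_disjoint hdisj, ← card_univ,
    ← Sym2.card_image_offDiag]
  refine card_le_card fun z hz => (mem_pairs _ z).2 ⟨by simp, ?_⟩
  rcases mem_union.1 hz with hzB | hzA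
  · exact hB z hzB
  · exact ((mem_pairs A z).1 hzA).2

lemma IsRainbowClique.colour_ne {V : Type} {G : SimpleGraph V} {c : Sym2 V → ℕ} {T : Finset V}
    (hT : IsRainbowClique G c T) {u v w : V} (hu : u ∈ T) (hv : v ∈ T) (hw : w ∈ T)
    (huv : u ≠ v) (huw : u ≠ w) (hvw : v ≠ w) : c s(u, w) ≠ c s(v, w) :=
  hT.2 u hu w hw v hv w hw huw hvw (by simp [huv, huw])

lemma IsRainbowClique.disjoint_sym2_toLeft {S : Type} [DecidableEq S]
    {G : SimpleGraph (S ⊕ {p : Sym2 S // ¬ p.IsDiag})}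
    {χ : Sym2 (S ⊕ {p : Sym2 S // ¬ p.IsDiag}) → ℕ}
    (hsame : ∀ p : {p : Sym2 S // ¬ p.IsDiag}, ∀ x ∈ p.val, ∀ y ∈ p.val,
      χ s(Sum.inl x, Sum.inr p) = χ s(Sum.inl y, Sum.inr p))
    {T : Finset (S ⊕ {p : Sym2 S // ¬ p.IsDiag})} (hT : IsRainbowClique G χ T) :
    Disjoint (T.toRight.map (Function.Embedding.subtype _)) T.toLeft.sym2 := by
  rw [disjoint_left]
  intro z hzT hzS
  obtain ⟨⟨z, hdiag⟩, hpT, rfl⟩ := mem_map.1 hzT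
  induction z using Sym2.ind with | h x y => ?_
  obtain ⟨hx, hy⟩ := mk_mem_sym2_iff.1 hzS
  exact hT.colour_ne (mem_toLeft.1 hx) (mem_toLeft.1 hy) (mem_toRight.1 hpT) (by simpa using hdiag)
    Sum.inl_ne_inr Sum.inl_ne_inr (hsame _ x (Sym2.mem_mk_left x y) y (Sym2.mem_mk_right x y))

theorem gadget_max_rainbow_clique_general {S : Type} [Fintype S] [DecidableEq S]
    (χ : Sym2 (S ⊕ {p : Sym2 S // ¬ p.IsDiag}) → ℕ)
    (cpair : {p : Sym2 S // ¬ p.IsDiag} → ℕ)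
    (hsame : ∀ (x : S) (p : {p : Sym2 S // ¬ p.IsDiag}), x ∈ p.val →
      χ s(Sum.inl x, Sum.inr p) = cpair p) :
    ∀ T : Finset (S ⊕ {p : Sym2 S // ¬ p.IsDiag}),
      IsRainbowClique (⊤ : SimpleGraph (S ⊕ {p : Sym2 S // ¬ p.IsDiag})) χ T →
      T.card ≤ (Fintype.card S).choose 2 + 1 := by
  intro T hT
  have hpairs := Sym2.card_add_choose_two_le_of_disjoint_sym2
    (fun z hz => by obtain ⟨p, -, rfl⟩ := mem_map.1 hz; exact p.2)
    (hT.disjoint_sym2_toLeft fun p x hx y hy => (hsame x p hx).trans (hsame y p hy).symm)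
  rw [card_map] at hpairs
  have hA := Nat.le_choose_two_add_one #T.toLeft
  have hsplit := card_toLeft_add_card_toRight (u := T)
  omega

/-- **Lemma (gadget, upper bound).** Let `|S| = s ≥ 3` and let `K` be the complete graph on
`S ⊕ S^(2)`, coloured so that for each pair `{x, y} ∈ S^(2)` the edges `(x, {x,y})` and
`(y, {x,y})` share a colour `cpair {x,y}`, these colours being pairwise distinct, while all
remaining edges get pairwise distinct colours different from every `cpair` value. Then every
rainbow clique in `(K, χ)` has at most `C(s,2) + 1` vertices. -/
theorem gadget_max_rainbow_clique {S : Type} [Fintype S] [DecidableEq S]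
    (hs : 3 ≤ Fintype.card S)
    (χ : Sym2 (S ⊕ {p : Sym2 S // ¬ p.IsDiag}) → ℕ)
    (cpair : {p : Sym2 S // ¬ p.IsDiag} → ℕ)
    (hsame : ∀ (x : S) (p : {p : Sym2 S // ¬ p.IsDiag}), x ∈ p.val →
      χ s(Sum.inl x, Sum.inr p) = cpair p)
    (hcpair : Function.Injective cpair)
    (hrest : ∀ e₁ e₂ : Sym2 (S ⊕ {p : Sym2 S // ¬ p.IsDiag}),
      ¬ e₁.IsDiag → ¬ e₂.IsDiag → ¬ SpecialEdge e₁ → ¬ SpecialEdge e₂ → e₁ ≠ e₂ →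
      χ e₁ ≠ χ e₂)
    (hrest' : ∀ e : Sym2 (S ⊕ {p : Sym2 S // ¬ p.IsDiag}),
      ¬ e.IsDiag → ¬ SpecialEdge e → ∀ p, χ e ≠ cpair p) :
    ∀ T : Finset (S ⊕ {p : Sym2 S // ¬ p.IsDiag}),
      IsRainbowClique (⊤ : SimpleGraph (S ⊕ {p : Sym2 S // ¬ p.IsDiag})) χ T →
      T.card ≤ (Fintype.card S).choose 2 + 1 :=
  gadget_max_rainbow_clique_general χ cpair hsame
end

section
/- Let s ≥ 3, let S be a set of size s, and let S^(2) be the set of two-element subsets of S. Let K be the complete graph on the (disjoint) vertex set S ∪ S^(2), and let χ be an edge-colouring of K such that: for every pair {x,y} ∈ S^(2), the two edges (x, {x,y}) and (y, {x,y}) receive the same colour c_{xy}; the colours c_{xy} are pairwise distinct over distinct pairs {x,y}; and all remaining edges of K receive pairwise distinct colours, each different from every c_{xy}. Then for any two distinct elements x, y ∈ S, the set T(x,y) := {x, y} ∪ (S^(2) ∖ {{x,y}}) is a rainbow clique in (K, χ) of size C(s,2) + 1. -/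
open Finset

theorem isRainbowClique_top_of_injOn {V : Type} (c : Sym2 V → ℕ) (T : Finset V)
    (hc : Set.InjOn c ((T : Set V).sym2 \ Sym2.diagSet)) :
    IsRainbowClique ⊤ c T := by
  refine ⟨fun u _ v _ huv => huv, fun u hu v hv a ha b hb huv hab hne hcol => hne ?_⟩
  exact hc ⟨Set.mk_mem_sym2_iff.2 ⟨hu, hv⟩, huv⟩ ⟨Set.mk_mem_sym2_iff.2 ⟨ha, hb⟩, hab⟩ hcol

abbrev GadgetVertex (S : Type) := S ⊕ {p : Sym2 S // ¬ p.IsDiag}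

section Colouring

variable {S : Type} {χ : Sym2 (GadgetVertex S) → ℕ} {cpair : {p : Sym2 S // ¬ p.IsDiag} → ℕ}

theorem gadget_colour_injOn
    (hsame : ∀ (x : S) (p : {p : Sym2 S // ¬ p.IsDiag}), x ∈ p.val →
      χ s(Sum.inl x, Sum.inr p) = cpair p)
    (hcpair : Function.Injective cpair)
    (hrest : ∀ e₁ e₂ : Sym2 (GadgetVertex S),
      ¬ e₁.IsDiag → ¬ e₂.IsDiag → ¬ SpecialEdge e₁ → ¬ SpecialEdge e₂ → e₁ ≠ e₂ →
      χ e₁ ≠ χ e₂)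
    (hrest' : ∀ e : Sym2 (GadgetVertex S), ¬ e.IsDiag → ¬ SpecialEdge e → ∀ p, χ e ≠ cpair p)
    {E : Set (Sym2 (GadgetVertex S))} (hE : ∀ e ∈ E, ¬ e.IsDiag)
    (hspecial : ∀ (x x' : S) (p : {p : Sym2 S // ¬ p.IsDiag}),
      s(Sum.inl x, Sum.inr p) ∈ E → s(Sum.inl x', Sum.inr p) ∈ E → x ∈ p.val → x' ∈ p.val →
      x = x') :
    Set.InjOn χ E := by
  intro e₁ he₁ e₂ he₂ hcol
  by_cases h₁ : SpecialEdge e₁ <;> by_cases h₂ : SpecialEdge e₂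
  · obtain ⟨x₁, p₁, hx₁, rfl⟩ := h₁
    obtain ⟨x₂, p₂, hx₂, rfl⟩ := h₂
    obtain rfl : p₁ = p₂ := hcpair (by rw [← hsame x₁ p₁ hx₁, ← hsame x₂ p₂ hx₂, hcol])
    rw [hspecial x₁ x₂ p₁ he₁ he₂ hx₁ hx₂]
  · obtain ⟨x₁, p₁, hx₁, rfl⟩ := h₁
    exact absurd (hcol.symm.trans (hsame x₁ p₁ hx₁)) (hrest' e₂ (hE e₂ he₂) h₂ p₁)
  · obtain ⟨x₂, p₂, hx₂, rfl⟩ := h₂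
    exact absurd (hcol.trans (hsame x₂ p₂ hx₂)) (hrest' e₁ (hE e₁ he₁) h₁ p₂)
  · by_contra hne
    exact hrest e₁ e₂ (hE e₁ he₁) (hE e₂ he₂) h₁ h₂ hne hcol

end Colouring

section Clique

variable {S : Type} [Fintype S] [DecidableEq S]

def gadgetT (x y : S) : Finset (GadgetVertex S) :=
  ({Sum.inl x, Sum.inl y} : Finset (GadgetVertex S)) ∪
    (univ.filter (fun p : {p : Sym2 S // ¬ p.IsDiag} => p.val ≠ s(x, y))).image Sum.inr

@[simp]
theorem inl_mem_gadgetT {x y z : S} : Sum.inl z ∈ gadgetT x y ↔ z = x ∨ z = y := by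
  simp [gadgetT]

@[simp]
theorem inr_mem_gadgetT {x y : S} {p : {p : Sym2 S // ¬ p.IsDiag}} :
    Sum.inr p ∈ gadgetT x y ↔ p.val ≠ s(x, y) := by
  simp [gadgetT]

theorem eq_of_mem_of_mem_gadgetT {x y : S} (hxy : x ≠ y) {z z' : S}
    {p : {p : Sym2 S // ¬ p.IsDiag}} (hz : Sum.inl z ∈ gadgetT x y)
    (hz' : Sum.inl z' ∈ gadgetT x y) (hp : Sum.inr p ∈ gadgetT x y)
    (hzp : z ∈ p.val) (hz'p : z' ∈ p.val) : z = z' := by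
  rw [inl_mem_gadgetT] at hz hz'
  rw [inr_mem_gadgetT] at hp
  obtain rfl | rfl := hz <;> obtain rfl | rfl := hz' <;> try rfl
  · exact absurd ((Sym2.mem_and_mem_iff hxy).1 ⟨hzp, hz'p⟩) hp
  · exact absurd ((Sym2.mem_and_mem_iff hxy).1 ⟨hz'p, hzp⟩) hp

theorem card_gadgetT {x y : S} (hxy : x ≠ y) :
    #(gadgetT x y) = (Fintype.card S).choose 2 + 1 := by
  set xy : {p : Sym2 S // ¬ p.IsDiag} := ⟨s(x, y), Sym2.mk_isDiag_iff.not.2 hxy⟩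
  have hdisj : Disjoint ({Sum.inl x, Sum.inl y} : Finset (GadgetVertex S))
      ((univ.filter (fun p : {p : Sym2 S // ¬ p.IsDiag} => p.val ≠ s(x, y))).image Sum.inr) := by
    simp [disjoint_left]
  have hfilter : univ.filter (fun p : {p : Sym2 S // ¬ p.IsDiag} => p.val ≠ s(x, y)) =
      univ.erase xy := by
    ext p
    simp [xy, Subtype.ext_iff]
  rw [gadgetT, card_union_of_disjoint hdisj, card_image_of_injective _ Sum.inr_injective,
    hfilter, card_pair (by simpa using hxy), ← Sym2.card_subtype_not_diag, ← card_univ,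
    ← card_erase_add_one (mem_univ xy)]
  omega

end Clique

theorem gadget_T_rainbow_clique_general {S : Type} [Fintype S] [DecidableEq S]
    (χ : Sym2 (S ⊕ {p : Sym2 S // ¬ p.IsDiag}) → ℕ)
    (cpair : {p : Sym2 S // ¬ p.IsDiag} → ℕ)
    (hsame : ∀ (x : S) (p : {p : Sym2 S // ¬ p.IsDiag}), x ∈ p.val →
      χ s(Sum.inl x, Sum.inr p) = cpair p)
    (hcpair : Function.Injective cpair)
    (hrest : ∀ e₁ e₂ : Sym2 (S ⊕ {p : Sym2 S // ¬ p.IsDiag}),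
      ¬ e₁.IsDiag → ¬ e₂.IsDiag → ¬ SpecialEdge e₁ → ¬ SpecialEdge e₂ → e₁ ≠ e₂ →
      χ e₁ ≠ χ e₂)
    (hrest' : ∀ e : Sym2 (S ⊕ {p : Sym2 S // ¬ p.IsDiag}),
      ¬ e.IsDiag → ¬ SpecialEdge e → ∀ p, χ e ≠ cpair p) :
    ∀ x y : S, x ≠ y →
      IsRainbowClique (⊤ : SimpleGraph (S ⊕ {p : Sym2 S // ¬ p.IsDiag})) χ
        (({Sum.inl x, Sum.inl y} : Finset (S ⊕ {p : Sym2 S // ¬ p.IsDiag})) ∪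
          (Finset.univ.filter
            (fun p : {p : Sym2 S // ¬ p.IsDiag} => p.val ≠ s(x, y))).image Sum.inr) ∧
      (({Sum.inl x, Sum.inl y} : Finset (S ⊕ {p : Sym2 S // ¬ p.IsDiag})) ∪
          (Finset.univ.filter
            (fun p : {p : Sym2 S // ¬ p.IsDiag} => p.val ≠ s(x, y))).image Sum.inr).card =
        (Fintype.card S).choose 2 + 1 := by
  intro x y hxy
  refine ⟨isRainbowClique_top_of_injOn χ (gadgetT x y) ?_, card_gadgetT hxy⟩
  exact gadget_colour_injOn hsame hcpair hrest hrest' (fun _ he => he.2)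
    fun _ _ _ hz hz' => eq_of_mem_of_mem_gadgetT hxy hz.1.1 hz'.1.1 hz.1.2

/-- **Lemma (gadget, maximum rainbow cliques).** With the complete graph on `S ⊕ S^(2)`
coloured as in the gadget construction, for any two distinct `x, y ∈ S` the set
`T(x, y) = {x, y} ∪ (S^(2) \\ {{x, y}})` is a rainbow clique of size `C(s,2) + 1`. -/
theorem gadget_T_rainbow_clique {S : Type} [Fintype S] [DecidableEq S]
    (hs : 3 ≤ Fintype.card S)
    (χ : Sym2 (S ⊕ {p : Sym2 S // ¬ p.IsDiag}) → ℕ)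
    (cpair : {p : Sym2 S // ¬ p.IsDiag} → ℕ)
    (hsame : ∀ (x : S) (p : {p : Sym2 S // ¬ p.IsDiag}), x ∈ p.val →
      χ s(Sum.inl x, Sum.inr p) = cpair p)
    (hcpair : Function.Injective cpair)
    (hrest : ∀ e₁ e₂ : Sym2 (S ⊕ {p : Sym2 S // ¬ p.IsDiag}),
      ¬ e₁.IsDiag → ¬ e₂.IsDiag → ¬ SpecialEdge e₁ → ¬ SpecialEdge e₂ → e₁ ≠ e₂ →
      χ e₁ ≠ χ e₂)
    (hrest' : ∀ e : Sym2 (S ⊕ {p : Sym2 S // ¬ p.IsDiag}),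
      ¬ e.IsDiag → ¬ SpecialEdge e → ∀ p, χ e ≠ cpair p) :
    ∀ x y : S, x ≠ y →
      IsRainbowClique (⊤ : SimpleGraph (S ⊕ {p : Sym2 S // ¬ p.IsDiag})) χ
        (({Sum.inl x, Sum.inl y} : Finset (S ⊕ {p : Sym2 S // ¬ p.IsDiag})) ∪
          (Finset.univ.filter
            (fun p : {p : Sym2 S // ¬ p.IsDiag} => p.val ≠ s(x, y))).image Sum.inr) ∧
      (({Sum.inl x, Sum.inl y} : Finset (S ⊕ {p : Sym2 S // ¬ p.IsDiag})) ∪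
          (Finset.univ.filter
            (fun p : {p : Sym2 S // ¬ p.IsDiag} => p.val ≠ s(x, y))).image Sum.inr).card =
        (Fintype.card S).choose 2 + 1 :=
  gadget_T_rainbow_clique_general χ cpair hsame hcpair hrest hrest'
end

section
/- Let s ≥ 3 and t ≥ 0 be integers. Let (H, χ_H) be an edge-coloured graph on C(s,2) + s vertices such that: for every vertex v of H there is a rainbow clique on C(s,2) + 1 vertices avoiding v, and for every colour k ∈ ℕ there is a rainbow clique on C(s,2) + 1 vertices none of whose edges is coloured k. Let T₁, T₂, U be sets, pairwise disjoint and disjoint from V(H), with |T₁| = |T₂| = t and |U| ≥ 2. Let G be the graph on vertex set V(H) ∪ T₁ ∪ T₂ ∪ U in which two distinct vertices are adjacent unless both lie in U, or one lies in T₁ and the other in T₂. Let χ be an edge-colouring of G that agrees with χ_H on the edges of H and assigns to all remaining edges of G pairwise distinct colours, none of which is used by χ_H. Then for any two distinct vertices x, y ∈ U and any colour k ∈ ℕ, the edge-coloured graph obtained from (G, χ) by adding the edge xy with colour k contains a rainbow clique on C(s,2) + t + 3 vertices. -/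
section CliqueConstruction

variable (VH T₁ T₂ U : Type)

/-- Membership in `T₁`. -/
def InT₁ : VH ⊕ T₁ ⊕ T₂ ⊕ U → Prop := fun a => ∃ u : T₁, a = Sum.inr (Sum.inl u)

/-- Membership in `T₂`. -/
def InT₂ : VH ⊕ T₁ ⊕ T₂ ⊕ U → Prop := fun a => ∃ u : T₂, a = Sum.inr (Sum.inr (Sum.inl u))

/-- Membership in `U`. -/
def InU : VH ⊕ T₁ ⊕ T₂ ⊕ U → Prop := fun a => ∃ u : U, a = Sum.inr (Sum.inr (Sum.inr u))

/-- The graph on `V(H) ∪ T₁ ∪ T₂ ∪ U` in which two distinct vertices are adjacent unless both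
lie in `U`, or one lies in `T₁` and the other in `T₂`. -/
def CliqueConstr : SimpleGraph (VH ⊕ T₁ ⊕ T₂ ⊕ U) where
  Adj a b := a ≠ b ∧ ¬(InU VH T₁ T₂ U a ∧ InU VH T₁ T₂ U b) ∧
    ¬(InT₁ VH T₁ T₂ U a ∧ InT₂ VH T₁ T₂ U b) ∧ ¬(InT₁ VH T₁ T₂ U b ∧ InT₂ VH T₁ T₂ U a)
  symm := ⟨by
    rintro a b ⟨h₁, h₂, h₃, h₄⟩
    exact ⟨h₁.symm, fun h => h₂ ⟨h.2, h.1⟩, h₄, h₃⟩⟩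
  loopless := ⟨fun a h => h.1 rfl⟩

end CliqueConstruction

/-!
Write `S = A ∪ W ∪ {x, y}` with `A` a rainbow clique of `H` on `C(s,2) + 1` vertices and `W` one
of `T₁`, `T₂`. All pairs of `S` except `xy` are edges of `G`, and since the colours outside `H`
are distinct and new, `S` is rainbow as soon as the colour `k` of `xy` occurs on no other edge
of `S`. If `k` is not a colour of `G` outside `H`, take `A` avoiding the colour `k`. Otherwise
`k` sits on a single edge outside `H`, no edge of `H` has colour `k`, and it suffices that `S`
misses one endpoint of that edge; one endpoint lies outside `U`, and it is avoided by choosing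
`A` (if it is in `H`) or `W` (if it is in `T₁ ∪ T₂`) suitably.
-/

open Finset

theorem isRainbowClique_sup_edge {V : Type} [DecidableEq V] {G : SimpleGraph V}
    {c : Sym2 V → ℕ} {S : Finset V} {e : Sym2 V} {k : ℕ}
    (hadj : ∀ a ∈ S, ∀ b ∈ S, a ≠ b → s(a, b) ≠ e → G.Adj a b)
    (hinj : ∀ a ∈ S, ∀ b ∈ S, ∀ p ∈ S, ∀ q ∈ S, G.Adj a b → G.Adj p q →
      s(a, b) ≠ s(p, q) → c s(a, b) ≠ c s(p, q))
    (hk : ∀ a ∈ S, ∀ b ∈ S, G.Adj a b → c s(a, b) ≠ k) :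
    IsRainbowClique (G ⊔ SimpleGraph.fromEdgeSet {e}) (Function.update c e k) S := by
  refine ⟨fun a ha b hb hab => ?_, fun a ha b hb p hp q hq hab hpq hne => ?_⟩
  · by_cases h : s(a, b) = e
    · exact Or.inr ⟨h, hab⟩
    · exact Or.inl (hadj a ha b hb hab h)
  by_cases h₁ : s(a, b) = e <;> by_cases h₂ : s(p, q) = e
  · exact absurd (h₁.trans h₂.symm) hne
  · rw [h₁, Function.update_self, Function.update_of_ne h₂]
    exact (hk p hp q hq (hadj p hp q hq hpq h₂)).symm
  · rw [h₂, Function.update_self, Function.update_of_ne h₁]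
    exact hk a ha b hb (hadj a ha b hb hab h₁)
  · rw [Function.update_of_ne h₁, Function.update_of_ne h₂]
    exact hinj a ha b hb p hp q hq (hadj a ha b hb hab h₁) (hadj p hp q hq hpq h₂) hne

section HEdges

variable {VH R : Type} {HH : SimpleGraph VH} {χH : Sym2 VH → ℕ}
  {G : SimpleGraph (VH ⊕ R)} {χ : Sym2 (VH ⊕ R) → ℕ}

def IsHEdge (HH : SimpleGraph VH) (e : Sym2 (VH ⊕ R)) : Prop :=
  ∃ u v : VH, HH.Adj u v ∧ e = s(Sum.inl u, Sum.inl v)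

theorem eq_inl_inl_or_not_isHEdge (a b : VH ⊕ R) :
    (∃ u v : VH, a = Sum.inl u ∧ b = Sum.inl v) ∨ ¬ IsHEdge HH s(a, b) := by
  rcases a with u | r <;> rcases b with v | r'
  · exact Or.inl ⟨u, v, rfl, rfl⟩
  all_goals exact Or.inr (by rintro ⟨u', v', -, h⟩; simp at h)

theorem colour_ne_colour_of_mem
    (hagree : ∀ u v : VH, HH.Adj u v → χ s(Sum.inl u, Sum.inl v) = χH s(u, v))
    (hnew : ∀ e₁ ∈ G.edgeSet, ∀ e₂ ∈ G.edgeSet, ¬ IsHEdge HH e₁ → ¬ IsHEdge HH e₂ →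
      e₁ ≠ e₂ → χ e₁ ≠ χ e₂)
    (hnew' : ∀ e ∈ G.edgeSet, ¬ IsHEdge HH e → ∀ u v : VH, HH.Adj u v → χ e ≠ χH s(u, v))
    {A : Finset VH} (hA : IsRainbowClique HH χH A) {S : Finset (VH ⊕ R)}
    (hS : ∀ v, Sum.inl v ∈ S → v ∈ A) :
    ∀ a ∈ S, ∀ b ∈ S, ∀ p ∈ S, ∀ q ∈ S, G.Adj a b → G.Adj p q →
      s(a, b) ≠ s(p, q) → χ s(a, b) ≠ χ s(p, q) := by
  intro a ha b hb p hp q hq hab hpq hne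
  have hH : ∀ {u v : VH}, Sum.inl u ∈ S → Sum.inl v ∈ S → G.Adj (Sum.inl u) (Sum.inl v) →
      HH.Adj u v := fun hu hv huv =>
    hA.1 (hS _ hu) (hS _ hv) fun h => G.ne_of_adj huv (congrArg Sum.inl h)
  rcases eq_inl_inl_or_not_isHEdge (HH := HH) a b with ⟨u, v, rfl, rfl⟩ | h₁ <;>
    rcases eq_inl_inl_or_not_isHEdge (HH := HH) p q with ⟨u', v', rfl, rfl⟩ | h₂
  · rw [hagree _ _ (hH ha hb hab), hagree _ _ (hH hp hq hpq)]
    refine hA.2 u (hS _ ha) v (hS _ hb) u' (hS _ hp) v' (hS _ hq) (hH ha hb hab).ne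
      (hH hp hq hpq).ne fun h => hne ?_
    simpa using congrArg (Sym2.map (Sum.inl : VH → VH ⊕ R)) h
  · rw [hagree _ _ (hH ha hb hab)]
    exact (hnew' _ hpq h₂ u v (hH ha hb hab)).symm
  · rw [hagree _ _ (hH hp hq hpq)]
    exact hnew' _ hab h₁ u' v' (hH hp hq hpq)
  · exact hnew _ hab _ hpq h₁ h₂ hne

theorem colour_ne_of_mem
    (hagree : ∀ u v : VH, HH.Adj u v → χ s(Sum.inl u, Sum.inl v) = χH s(u, v))
    {A : Finset VH} (hA : HH.IsClique (A : Set VH)) {S : Finset (VH ⊕ R)}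
    (hS : ∀ v, Sum.inl v ∈ S → v ∈ A) {k : ℕ}
    (hkA : ∀ u ∈ A, ∀ v ∈ A, u ≠ v → χH s(u, v) ≠ k)
    (hknew : ∀ a ∈ S, ∀ b ∈ S, G.Adj a b → ¬ IsHEdge HH s(a, b) → χ s(a, b) ≠ k) :
    ∀ a ∈ S, ∀ b ∈ S, G.Adj a b → χ s(a, b) ≠ k := by
  intro a ha b hb hab
  rcases eq_inl_inl_or_not_isHEdge (HH := HH) a b with ⟨u, v, rfl, rfl⟩ | h
  · have huv : u ≠ v := fun h => G.ne_of_adj hab (congrArg Sum.inl h)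
    rw [hagree _ _ (hA (hS _ ha) (hS _ hb) huv)]
    exact hkA u (hS _ ha) v (hS _ hb) huv
  · exact hknew a ha b hb hab h

end HEdges

section Construction

variable {VH T₁ T₂ U : Type} [DecidableEq U]

theorem cliqueConstr_adj_of_mem_disjSum {A : Finset VH} {W₁ : Finset T₁} {W₂ : Finset T₂}
    {x y : U} (hW : W₁ = ∅ ∨ W₂ = ∅) :
    ∀ a ∈ A.disjSum (W₁.disjSum (W₂.disjSum {x, y})),
    ∀ b ∈ A.disjSum (W₁.disjSum (W₂.disjSum {x, y})), a ≠ b →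
      s(a, b) ≠ s(Sum.inr (Sum.inr (Sum.inr x)), Sum.inr (Sum.inr (Sum.inr y))) →
      (CliqueConstr VH T₁ T₂ U).Adj a b := by
  intro a ha b hb hab hxy
  refine ⟨hab, ?_, ?_, ?_⟩
  · rintro ⟨⟨u, rfl⟩, ⟨u', rfl⟩⟩
    simp only [inr_mem_disjSum, mem_insert, mem_singleton] at ha hb
    rcases ha with rfl | rfl <;> rcases hb with rfl | rfl <;> simp_all [Sym2.eq_swap]
  all_goals
    rintro ⟨⟨u, rfl⟩, ⟨u', rfl⟩⟩
    rcases hW with rfl | rfl <;> simp at ha hb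

variable [Fintype T₁] [Fintype T₂] {HH : SimpleGraph VH} {χH : Sym2 VH → ℕ}
  {χ : Sym2 (VH ⊕ T₁ ⊕ T₂ ⊕ U) → ℕ} {m : ℕ}

theorem exists_notMem_disjSum (x y : U)
    (havoidv : ∀ v : VH, ∃ T : Finset VH, IsRainbowClique HH χH T ∧ T.card = m ∧ v ∉ T)
    (hex : ∃ T : Finset VH, IsRainbowClique HH χH T ∧ T.card = m)
    (z : VH ⊕ T₁ ⊕ T₂ ⊕ U) (hz : ¬ InU VH T₁ T₂ U z) :
    ∃ (A : Finset VH) (W₁ : Finset T₁) (W₂ : Finset T₂),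
      IsRainbowClique HH χH A ∧ A.card = m ∧
      ((W₁ = univ ∧ W₂ = ∅) ∨ (W₁ = ∅ ∧ W₂ = univ)) ∧
      z ∉ A.disjSum (W₁.disjSum (W₂.disjSum {x, y})) := by
  obtain ⟨A₀, hA₀, hA₀c⟩ := hex
  rcases z with v | u | u | u
  · obtain ⟨A, hA, hAc, hv⟩ := havoidv v
    exact ⟨A, univ, ∅, hA, hAc, Or.inl ⟨rfl, rfl⟩, by simpa using hv⟩
  · exact ⟨A₀, ∅, univ, hA₀, hA₀c, Or.inr ⟨rfl, rfl⟩, by simp⟩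
  · exact ⟨A₀, univ, ∅, hA₀, hA₀c, Or.inl ⟨rfl, rfl⟩, by simp⟩
  · exact absurd ⟨u, rfl⟩ hz

theorem exists_disjSum_avoiding_colour
    (hnew : ∀ e₁ ∈ (CliqueConstr VH T₁ T₂ U).edgeSet, ∀ e₂ ∈ (CliqueConstr VH T₁ T₂ U).edgeSet,
      ¬ IsHEdge HH e₁ → ¬ IsHEdge HH e₂ → e₁ ≠ e₂ → χ e₁ ≠ χ e₂)
    (hnew' : ∀ e ∈ (CliqueConstr VH T₁ T₂ U).edgeSet, ¬ IsHEdge HH e →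
      ∀ u v : VH, HH.Adj u v → χ e ≠ χH s(u, v))
    (havoidv : ∀ v : VH, ∃ T : Finset VH, IsRainbowClique HH χH T ∧ T.card = m ∧ v ∉ T)
    (havoidc : ∀ k : ℕ, ∃ T : Finset VH, IsRainbowClique HH χH T ∧ T.card = m ∧
      ∀ u ∈ T, ∀ v ∈ T, u ≠ v → χH s(u, v) ≠ k)
    (x y : U) (k : ℕ) :
    ∃ (A : Finset VH) (W₁ : Finset T₁) (W₂ : Finset T₂),
      IsRainbowClique HH χH A ∧ A.card = m ∧
      ((W₁ = univ ∧ W₂ = ∅) ∨ (W₁ = ∅ ∧ W₂ = univ)) ∧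
      (∀ u ∈ A, ∀ v ∈ A, u ≠ v → χH s(u, v) ≠ k) ∧
      ∀ a ∈ A.disjSum (W₁.disjSum (W₂.disjSum {x, y})),
      ∀ b ∈ A.disjSum (W₁.disjSum (W₂.disjSum {x, y})),
        (CliqueConstr VH T₁ T₂ U).Adj a b → ¬ IsHEdge HH s(a, b) → χ s(a, b) ≠ k := by
  by_cases hk : ∃ a b, (CliqueConstr VH T₁ T₂ U).Adj a b ∧ ¬ IsHEdge HH s(a, b) ∧ χ s(a, b) = k
  · obtain ⟨a, b, hab, hab_new, habk⟩ := hk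
    have hex : ∃ T : Finset VH, IsRainbowClique HH χH T ∧ T.card = m :=
      (havoidc k).imp fun _ h => ⟨h.1, h.2.1⟩
    obtain ⟨A, W₁, W₂, hA, hAc, hW, hout⟩ : ∃ (A : Finset VH) (W₁ : Finset T₁) (W₂ : Finset T₂),
        IsRainbowClique HH χH A ∧ A.card = m ∧
        ((W₁ = univ ∧ W₂ = ∅) ∨ (W₁ = ∅ ∧ W₂ = univ)) ∧
        ¬ (a ∈ A.disjSum (W₁.disjSum (W₂.disjSum {x, y})) ∧
          b ∈ A.disjSum (W₁.disjSum (W₂.disjSum {x, y}))) := by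
      have hU : ¬ InU VH T₁ T₂ U a ∨ ¬ InU VH T₁ T₂ U b := not_and_or.1 hab.2.1
      rcases hU with h | h
      · obtain ⟨A, W₁, W₂, hA, hAc, hW, ha⟩ := exists_notMem_disjSum x y havoidv hex a h
        exact ⟨A, W₁, W₂, hA, hAc, hW, fun hab => ha hab.1⟩
      · obtain ⟨A, W₁, W₂, hA, hAc, hW, hb⟩ := exists_notMem_disjSum x y havoidv hex b h
        exact ⟨A, W₁, W₂, hA, hAc, hW, fun hab => hb hab.2⟩
    -- `k` is a colour outside `H`, so no edge of `H` has colour `k`, and `ab` is its only edge.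
    refine ⟨A, W₁, W₂, hA, hAc, hW, fun u hu v hv huv h =>
      hnew' _ hab hab_new u v (hA.1 hu hv huv) (habk.trans h.symm), ?_⟩
    intro p hp q hq hpq hpq_new hpqk
    have hpq_ab : s(p, q) = s(a, b) := by
      by_contra hne
      exact hnew _ hpq _ hab hpq_new hab_new hne (hpqk.trans habk.symm)
    rcases Sym2.eq_iff.1 hpq_ab with ⟨rfl, rfl⟩ | ⟨rfl, rfl⟩
    · exact hout ⟨hp, hq⟩
    · exact hout ⟨hq, hp⟩
  · obtain ⟨A, hA, hAc, hkA⟩ := havoidc k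
    exact ⟨A, univ, ∅, hA, hAc, Or.inl ⟨rfl, rfl⟩, hkA,
      fun p _ q _ hpq hpq_new hpqk => hk ⟨p, q, hpq, hpq_new, hpqk⟩⟩

end Construction

theorem clique_constr_add_edge_creates_rainbow_clique_general
    {VH T₁ T₂ U : Type} [Fintype T₁] [Fintype T₂]
    [DecidableEq VH] [DecidableEq T₁] [DecidableEq T₂] [DecidableEq U]
    (s t : ℕ)
    (hT₁ : Fintype.card T₁ = t) (hT₂ : Fintype.card T₂ = t)
    (HH : SimpleGraph VH) (χH : Sym2 VH → ℕ)
    (havoidv : ∀ v : VH, ∃ T : Finset VH,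
      IsRainbowClique HH χH T ∧ T.card = s.choose 2 + 1 ∧ v ∉ T)
    (havoidc : ∀ k : ℕ, ∃ T : Finset VH,
      IsRainbowClique HH χH T ∧ T.card = s.choose 2 + 1 ∧
      ∀ u ∈ T, ∀ v ∈ T, u ≠ v → χH s(u, v) ≠ k)
    (χ : Sym2 (VH ⊕ T₁ ⊕ T₂ ⊕ U) → ℕ)
    -- `χ` agrees with `χH` on the edges of `H`:
    (hagree : ∀ u v : VH, HH.Adj u v → χ s(Sum.inl u, Sum.inl v) = χH s(u, v))
    -- the remaining edges of `G` receive pairwise distinct colours: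
    (hnew : ∀ e₁ ∈ (CliqueConstr VH T₁ T₂ U).edgeSet, ∀ e₂ ∈ (CliqueConstr VH T₁ T₂ U).edgeSet,
      (¬ ∃ u v : VH, HH.Adj u v ∧ e₁ = s(Sum.inl u, Sum.inl v)) →
      (¬ ∃ u v : VH, HH.Adj u v ∧ e₂ = s(Sum.inl u, Sum.inl v)) →
      e₁ ≠ e₂ → χ e₁ ≠ χ e₂)
    -- and none of the colours on the remaining edges is used by `χH`:
    (hnew' : ∀ e ∈ (CliqueConstr VH T₁ T₂ U).edgeSet,
      (¬ ∃ u v : VH, HH.Adj u v ∧ e = s(Sum.inl u, Sum.inl v)) →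
      ∀ u v : VH, HH.Adj u v → χ e ≠ χH s(u, v)) :
    ∀ x y : U, x ≠ y → ∀ k : ℕ,
      ∃ T : Finset (VH ⊕ T₁ ⊕ T₂ ⊕ U),
        IsRainbowClique
          (CliqueConstr VH T₁ T₂ U ⊔ SimpleGraph.fromEdgeSet
            {s((Sum.inr (Sum.inr (Sum.inr x)) : VH ⊕ T₁ ⊕ T₂ ⊕ U),
               Sum.inr (Sum.inr (Sum.inr y)))})
          (Function.update χ
            s((Sum.inr (Sum.inr (Sum.inr x)) : VH ⊕ T₁ ⊕ T₂ ⊕ U),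
              Sum.inr (Sum.inr (Sum.inr y))) k)
          T ∧
        T.card = s.choose 2 + t + 3 := by
  intro x y hxy k
  obtain ⟨A, W₁, W₂, hA, hAc, hW, hkA, hknew⟩ :=
    exists_disjSum_avoiding_colour hnew hnew' havoidv havoidc x y k
  have hS : ∀ v, Sum.inl v ∈ A.disjSum (W₁.disjSum (W₂.disjSum {x, y})) → v ∈ A :=
    fun _ => inl_mem_disjSum.1
  refine ⟨_, isRainbowClique_sup_edge
    (cliqueConstr_adj_of_mem_disjSum (hW.symm.imp And.left And.right))
    (colour_ne_colour_of_mem hagree hnew hnew' hA hS)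
    (colour_ne_of_mem hagree hA.1 hS hkA hknew), ?_⟩
  rcases hW with ⟨rfl, rfl⟩ | ⟨rfl, rfl⟩ <;>
    simp only [card_disjSum, card_univ, card_empty, card_pair hxy, hAc, hT₁, hT₂] <;> omega

/-- **Lemma (adding an edge inside `U` creates a big rainbow clique).** Let `s ≥ 3`, `t ≥ 0`,
and let `(H, χH)` be an edge-coloured graph on `C(s,2) + s` vertices such that every vertex can
be avoided by a rainbow clique on `C(s,2) + 1` vertices and every colour can be avoided by a
rainbow clique on `C(s,2) + 1` vertices. Let `|T₁| = |T₂| = t` and `|U| ≥ 2`, form the graph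
`G` on `V(H) ∪ T₁ ∪ T₂ ∪ U` where two distinct vertices are adjacent unless both lie in `U` or
one lies in `T₁` and the other in `T₂`, and colour it by `χ` agreeing with `χH` on the edges of
`H` and giving all remaining edges pairwise distinct colours unused by `χH`. Then for any two
distinct `x, y ∈ U` and any colour `k`, adding the edge `xy` in colour `k` creates a rainbow
clique on `C(s,2) + t + 3` vertices. -/
theorem clique_constr_add_edge_creates_rainbow_clique
    {VH T₁ T₂ U : Type} [Fintype VH] [Fintype T₁] [Fintype T₂] [Fintype U]
    [DecidableEq VH] [DecidableEq T₁] [DecidableEq T₂] [DecidableEq U]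
    (s t : ℕ) (hs : 3 ≤ s)
    (hVH : Fintype.card VH = s.choose 2 + s)
    (hT₁ : Fintype.card T₁ = t) (hT₂ : Fintype.card T₂ = t)
    (hU : 2 ≤ Fintype.card U)
    (HH : SimpleGraph VH) (χH : Sym2 VH → ℕ)
    (havoidv : ∀ v : VH, ∃ T : Finset VH,
      IsRainbowClique HH χH T ∧ T.card = s.choose 2 + 1 ∧ v ∉ T)
    (havoidc : ∀ k : ℕ, ∃ T : Finset VH,
      IsRainbowClique HH χH T ∧ T.card = s.choose 2 + 1 ∧
      ∀ u ∈ T, ∀ v ∈ T, u ≠ v → χH s(u, v) ≠ k)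
    (χ : Sym2 (VH ⊕ T₁ ⊕ T₂ ⊕ U) → ℕ)
    -- `χ` agrees with `χH` on the edges of `H`:
    (hagree : ∀ u v : VH, HH.Adj u v → χ s(Sum.inl u, Sum.inl v) = χH s(u, v))
    -- the remaining edges of `G` receive pairwise distinct colours:
    (hnew : ∀ e₁ ∈ (CliqueConstr VH T₁ T₂ U).edgeSet, ∀ e₂ ∈ (CliqueConstr VH T₁ T₂ U).edgeSet,
      (¬ ∃ u v : VH, HH.Adj u v ∧ e₁ = s(Sum.inl u, Sum.inl v)) →
      (¬ ∃ u v : VH, HH.Adj u v ∧ e₂ = s(Sum.inl u, Sum.inl v)) →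
      e₁ ≠ e₂ → χ e₁ ≠ χ e₂)
    -- and none of the colours on the remaining edges is used by `χH`:
    (hnew' : ∀ e ∈ (CliqueConstr VH T₁ T₂ U).edgeSet,
      (¬ ∃ u v : VH, HH.Adj u v ∧ e = s(Sum.inl u, Sum.inl v)) →
      ∀ u v : VH, HH.Adj u v → χ e ≠ χH s(u, v)) :
    ∀ x y : U, x ≠ y → ∀ k : ℕ,
      ∃ T : Finset (VH ⊕ T₁ ⊕ T₂ ⊕ U),
        IsRainbowClique
          (CliqueConstr VH T₁ T₂ U ⊔ SimpleGraph.fromEdgeSet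
            {s((Sum.inr (Sum.inr (Sum.inr x)) : VH ⊕ T₁ ⊕ T₂ ⊕ U),
               Sum.inr (Sum.inr (Sum.inr y)))})
          (Function.update χ
            s((Sum.inr (Sum.inr (Sum.inr x)) : VH ⊕ T₁ ⊕ T₂ ⊕ U),
              Sum.inr (Sum.inr (Sum.inr y))) k)
          T ∧
        T.card = s.choose 2 + t + 3 :=
  clique_constr_add_edge_creates_rainbow_clique_general s t hT₁ hT₂ HH χH havoidv havoidc χ hagree
    hnew hnew'
end
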